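/- arXiv:2605.29143 — 4 statements merged into one kernel-verified Lean document; each statement's English description precedes it below -/
import Mathlib

section
/- Let E ∈ L be an Euler vector field of weight 1, i.e. P_E(V,W) = V∘W for all V, W ∈ L. Then for every integer k ≥ 1 and all V, W ∈ L: [E^k, V∘W] = [E^k, V]∘W + V∘[E^k, W] + k · (E^{k−1} ∘ V ∘ W), where k· denotes the natural-number scalar action on the additive group of L. -/
/-- `P_U(V,W) := [U, V∘W] − [U,V]∘W − V∘[U,W]`, where the ring multiplication plays
the role of `∘` and `br` is the Lie bracket. -/
def Pform {L : Type*} [Mul L] [Sub L] (br : L → L → L) (U V W : L) : L :=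
  br U (V * W) - br U V * W - V * br U W

/-- if `E` is an Euler vector field of weight 1, then
`[E^k, V∘W] = [E^k, V]∘W + V∘[E^k, W] + k · (E^{k−1} ∘ V ∘ W)` for all `k ≥ 1`. -/
theorem bracket_pow_mul {L : Type*} [CommRing L] (br : L → L → L)
    (hadd_left : ∀ x y z : L, br (x + y) z = br x z + br y z)
    (hadd_right : ∀ x y z : L, br x (y + z) = br x y + br x z)
    (halt : ∀ x : L, br x x = 0)
    (hjacobi : ∀ x y z : L, br x (br y z) + br y (br z x) + br z (br x y) = 0)
    (hF : ∀ U V W Z : L,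
      Pform br (U * V) W Z = U * Pform br V W Z + V * Pform br U W Z)
    (E : L) (hE : ∀ V W : L, Pform br E V W = V * W) :
    ∀ (k : ℕ), 1 ≤ k → ∀ V W : L,
      br (E ^ k) (V * W)
        = br (E ^ k) V * W + V * br (E ^ k) W + k • (E ^ (k - 1) * V * W) := by
  have key : ∀ k : ℕ, 1 ≤ k → ∀ V W : L,
      Pform br (E ^ k) V W = (k : L) * (E ^ (k - 1) * V * W) := by
    intro k hk
    induction k, hk using Nat.le_induction with
    | base =>
      intro V W
      simpa using hE V W
    | succ n hn ih =>
      intro V W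
      rw [pow_succ, hF, ih, hE]
      simp only [Nat.add_sub_cancel]
      have hpow : E * E ^ (n - 1) = E ^ n := by
        rw [← pow_succ', Nat.sub_add_cancel hn]
      push_cast
      calc E ^ n * (V * W) + E * ((n : L) * (E ^ (n - 1) * V * W))
          = E ^ n * (V * W) + (n : L) * ((E * E ^ (n - 1)) * V * W) := by ring
        _ = ((n : L) + 1) * (E ^ n * V * W) := by rw [hpow]; ring
  intro k hk V W
  have h := key k hk V W
  unfold Pform at h
  have : (k : ℕ) • (E ^ (k - 1) * V * W) = (k : L) * (E ^ (k - 1) * V * W) := by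
    simp [nsmul_eq_mul]
  rw [this]
  linear_combination h
end

section
/- Let E ∈ L be an Euler vector field of weight 1, i.e. P_E(V,W) = V∘W for all V, W ∈ L. Then for all integers k, l ≥ 0 with k + l ≥ 1, one has [E^k, E^l] = (l − k) · E^{k+l−1}, where (l − k)· denotes the integer scalar action on the additive group of L. -/
/-- if `E` is an Euler vector field of weight 1, then
`[E^k, E^l] = (l − k) · E^{k+l−1}` for all `k, l ≥ 0` with `k + l ≥ 1`. -/
theorem bracket_pow_pow {L : Type*} [CommRing L] (br : L → L → L)
    (hadd_left : ∀ x y z : L, br (x + y) z = br x z + br y z)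
    (hadd_right : ∀ x y z : L, br x (y + z) = br x y + br x z)
    (halt : ∀ x : L, br x x = 0)
    (hjacobi : ∀ x y z : L, br x (br y z) + br y (br z x) + br z (br x y) = 0)
    (hF : ∀ U V W Z : L,
      Pform br (U * V) W Z = U * Pform br V W Z + V * Pform br U W Z)
    (E : L) (hE : ∀ V W : L, Pform br E V W = V * W) :
    ∀ k l : ℕ, 1 ≤ k + l →
      br (E ^ k) (E ^ l) = ((l : ℤ) - (k : ℤ)) • E ^ (k + l - 1) := by
  -- antisymmetry
  have hskew : ∀ x y : L, br x y = - br y x := by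
    intro x y
    have h := halt (x + y)
    rw [hadd_left, hadd_right, hadd_right, halt, halt] at h
    linear_combination h
  -- Leibniz-type rule for E
  have hleib : ∀ V W : L, br E (V * W) = br E V * W + V * br E W + V * W := by
    intro V W
    have h := hE V W
    unfold Pform at h
    linear_combination h
  -- br E 1 = -1
  have hE1 : br E (1 : L) = -1 := by
    have h := hleib 1 1
    simp only [one_mul, mul_one] at h
    linear_combination -h
  -- br E (E^n) = (n-1) • E^n
  have hC : ∀ n : ℕ, br E (E ^ n) = ((n : ℤ) - 1) • E ^ n := by
    intro n
    induction n with
    | zero => simpa [zsmul_eq_mul] using hE1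
    | succ n ih =>
      have h := hleib E (E ^ n)
      rw [halt, ih, show E * E ^ n = E ^ (n + 1) by ring] at h
      rw [h]
      simp only [zsmul_eq_mul]
      push_cast
      ring
  -- Pform for powers of E
  have hD : ∀ (m : ℕ) (W Z : L),
      Pform br (E ^ (m + 1)) W Z = ((m : ℤ) + 1) • (E ^ m * (W * Z)) := by
    intro m
    induction m with
    | zero =>
      intro W Z
      simpa [zsmul_eq_mul] using hE W Z
    | succ m ih =>
      intro W Z
      have h := hF (E ^ (m + 1)) E W Z
      rw [show E ^ (m + 1) * E = E ^ (m + 1 + 1) by ring] at h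
      rw [ih W Z, hE W Z] at h
      rw [h]
      simp only [zsmul_eq_mul]
      push_cast
      ring
  -- bracket with 1
  have hone : ∀ m : ℕ, br (E ^ (m + 1)) 1 = -((m : ℤ) + 1) • E ^ m := by
    intro m
    have h := hD m 1 1
    unfold Pform at h
    simp only [one_mul, mul_one, zsmul_eq_mul] at h
    simp only [zsmul_eq_mul]
    push_cast at h ⊢
    linear_combination -h
  -- main lemma for k ≥ 1
  have hmain : ∀ (m l : ℕ),
      br (E ^ (m + 1)) (E ^ l) = ((l : ℤ) - ((m : ℤ) + 1)) • E ^ (m + l) := by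
    intro m l
    induction l with
    | zero =>
      simpa [zsmul_eq_mul] using hone m
    | succ l ih =>
      have h := hD m E (E ^ l)
      unfold Pform at h
      have hbE : br (E ^ (m + 1)) E = (-(m : ℤ)) • E ^ (m + 1) := by
        rw [hskew, hC (m + 1)]
        simp only [zsmul_eq_mul]
        push_cast
        ring
      rw [hbE, ih, show E * E ^ l = E ^ (l + 1) by ring] at h
      simp only [zsmul_eq_mul] at h ⊢
      push_cast at h ⊢
      linear_combination h
  intro k l hkl
  match k with
  | 0 =>
    match l with
    | n + 1 =>
      rw [hskew, pow_zero, hone n, show 0 + (n + 1) - 1 = n by omega]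
      simp only [zsmul_eq_mul]
      push_cast
      ring
  | m + 1 =>
    rw [hmain m l, show m + 1 + l - 1 = m + l by omega]
    simp only [zsmul_eq_mul]
    push_cast
    ring
end

section
/- Suppose λ₁, λ₂, λ₃, λ₄ ∈ A satisfy the Cayley–Hamilton relation ∏_{i=1}^{4} (E − λᵢ • e) = 0 in L (product with respect to ∘). Then for every integer k ≥ 1: ∑_{i=1}^{4} ( (1−k)·E^k − (δ(E^k)(λᵢ)) • e + k·(λᵢ • E^{k−1}) ) ∘ ∏_{j ≠ i} (E − λⱼ • e) = 0, where (1−k)· and k· denote integer and natural-number scalar actions on the additive group of L, respectively. -/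
/-!
For `U = E^k` the F-identity and the Euler property give `P_U(V,W) = k E^{k-1} ∘ V ∘ W`, which
says exactly that `X ↦ [U,X] + k E^{k-1} ∘ X` is a derivation of `L`. Applying it to the vanishing
product `∏ᵢ (E − λᵢ • e)` gives `∑ᵢ [U, E − λᵢ • e] ∘ ∏_{j≠i} (E − λⱼ • e) = 0`, the correction
terms summing to multiples of the product itself. The Leibniz rule for `δ`, `[E, E^k] = (k−1) E^k`
and `[U, e] = −k E^{k-1}` then identify `[U, E − λᵢ • e]` with the `i`-th coefficient.
-/

open Finset

theorem Derivation.leibniz_finsetProd {R A M : Type*} [CommSemiring R] [CommSemiring A]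
    [Algebra R A] [AddCommMonoid M] [Module A M] [Module R M] (D : Derivation R A M)
    {ι : Type*} [DecidableEq ι] (s : Finset ι) (f : ι → A) :
    D (∏ i ∈ s, f i) = ∑ i ∈ s, (∏ j ∈ s.erase i, f j) • D (f i) := by
  induction s using Finset.induction_on with
  | empty => simp
  | insert a s ha ih =>
    rw [prod_insert ha, sum_insert ha, erase_insert ha, D.leibniz, ih, smul_sum, add_comm]
    congr 1
    refine sum_congr rfl fun i hi => ?_
    rw [erase_insert_of_ne (ne_of_mem_of_not_mem hi ha).symm, prod_insert (by simp [ha]),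
      mul_smul]

section Bracket

variable {L : Type*} [CommRing L] {br : L → L → L}

theorem bracket_anticomm (hadd_left : ∀ x y z : L, br (x + y) z = br x z + br y z)
    (hadd_right : ∀ x y z : L, br x (y + z) = br x y + br x z) (halt : ∀ x : L, br x x = 0)
    (x y : L) : br x y = -br y x := by
  have h := halt (x + y)
  rw [hadd_left, hadd_right, hadd_right, halt, halt] at h
  linear_combination h

def Pform.derivation (hadd_right : ∀ x y z : L, br x (y + z) = br x y + br x z) {U c : L}
    (hU : ∀ V W : L, Pform br U V W = c * (V * W)) : Derivation ℤ L L :=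
  Derivation.mk'
    (AddMonoidHom.mk' (fun X => br U X + c * X) fun X Y => by
      rw [hadd_right]; ring).toIntLinearMap
    fun X Y => by
      have h := hU X Y
      simp only [Pform] at h
      show br U (X * Y) + c * (X * Y) = X * (br U Y + c * Y) + Y * (br U X + c * X)
      linear_combination h

theorem Pform.derivation_apply (hadd_right : ∀ x y z : L, br x (y + z) = br x y + br x z)
    {U c : L} (hU : ∀ V W : L, Pform br U V W = c * (V * W)) (X : L) :
    Pform.derivation hadd_right hU X = br U X + c * X :=
  rfl

theorem sum_bracket_mul_prod_erase_eq_zero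
    (hadd_right : ∀ x y z : L, br x (y + z) = br x y + br x z) {U c : L}
    (hU : ∀ V W : L, Pform br U V W = c * (V * W)) {ι : Type*} [Fintype ι] [DecidableEq ι]
    (F : ι → L) (hprod : ∏ i, F i = 0) :
    ∑ i, br U (F i) * ∏ j ∈ univ.erase i, F j = 0 := by
  have h := (Pform.derivation hadd_right hU).leibniz_finsetProd univ F
  rw [hprod, map_zero] at h
  rw [h]
  refine sum_congr rfl fun i hi => ?_
  have hcancel : F i * ∏ j ∈ univ.erase i, F j = 0 := by rw [mul_prod_erase _ _ hi, hprod]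
  rw [Pform.derivation_apply, smul_eq_mul]
  linear_combination (-c) * hcancel

theorem Pform_euler_pow
    (hF : ∀ U V W Z : L, Pform br (U * V) W Z = U * Pform br V W Z + V * Pform br U W Z)
    {E : L} (hE : ∀ V W : L, Pform br E V W = V * W) (n : ℕ) (V W : L) :
    Pform br (E ^ (n + 1)) V W = ((n + 1 : L) * E ^ n) * (V * W) := by
  induction n with
  | zero => simp [hE]
  | succ n ih =>
    rw [pow_succ, hF, hE, ih]
    push_cast
    ring

theorem bracket_euler_pow (hadd_right : ∀ x y z : L, br x (y + z) = br x y + br x z)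
    (halt : ∀ x : L, br x x = 0) {E : L} (hE : ∀ V W : L, Pform br E V W = V * W) (n : ℕ) :
    br E (E ^ (n + 1)) = n * E ^ (n + 1) := by
  -- `[E, ·] + id` is a derivation fixing `E`, so it multiplies `E ^ (n + 1)` by `n + 1`.
  have hE' : ∀ V W : L, Pform br E V W = 1 * (V * W) := by simpa using hE
  have h := (Pform.derivation hadd_right hE').leibniz_pow E (n + 1)
  simp only [Pform.derivation_apply, halt, one_mul, zero_add, smul_eq_mul, nsmul_eq_mul,
    add_tsub_cancel_right] at h
  rw [← pow_succ] at h
  push_cast at h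
  linear_combination h

theorem bracket_euler_pow_sub_smul_one {A : Type*} [CommRing A] [Algebra A L]
    (hadd_left : ∀ x y z : L, br (x + y) z = br x z + br y z)
    (hadd_right : ∀ x y z : L, br x (y + z) = br x y + br x z) (halt : ∀ x : L, br x x = 0)
    {δ : L → A → A} (hLeib : ∀ (V W : L) (a : A), br V (a • W) = a • br V W + δ V a • W)
    (hF : ∀ U V W Z : L, Pform br (U * V) W Z = U * Pform br V W Z + V * Pform br U W Z)
    {E : L} (hE : ∀ V W : L, Pform br E V W = V * W) {k : ℕ} (hk : 1 ≤ k) (a : A) :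
    br (E ^ k) (E - a • (1 : L)) =
      ((1 : ℤ) - (k : ℤ)) • E ^ k - δ (E ^ k) a • (1 : L) + k • (a • E ^ (k - 1)) := by
  obtain ⟨m, rfl⟩ := Nat.exists_eq_add_of_le' hk
  have hU := Pform_euler_pow hF hE m
  have hbr_one : br (E ^ (m + 1)) 1 = -((m + 1 : L) * E ^ m) := by
    have h := (Pform.derivation hadd_right hU).map_one_eq_zero
    rw [Pform.derivation_apply] at h
    linear_combination h
  have hbr_E : br (E ^ (m + 1)) E = -(m * E ^ (m + 1)) := by
    rw [bracket_anticomm hadd_left hadd_right halt, bracket_euler_pow hadd_right halt hE]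
  have hbr_sub : br (E ^ (m + 1)) (E - a • 1) = br (E ^ (m + 1)) E - br (E ^ (m + 1)) (a • 1) :=
    (AddMonoidHom.mk' _ (hadd_right (E ^ (m + 1)))).map_sub _ _
  rw [hbr_sub, hLeib, hbr_E, hbr_one, zsmul_eq_mul, nsmul_eq_mul, add_tsub_cancel_right]
  simp only [Algebra.smul_def]
  push_cast
  ring

end Bracket

theorem euler_cayley_hamilton_derivative_general {A L : Type*} [CommRing A] [CommRing L]
    [Algebra A L] (br : L → L → L)
    (hadd_left : ∀ x y z : L, br (x + y) z = br x z + br y z)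
    (hadd_right : ∀ x y z : L, br x (y + z) = br x y + br x z)
    (halt : ∀ x : L, br x x = 0)
    (δ : L → A → A)
    (hLeib : ∀ (V W : L) (a : A), br V (a • W) = a • br V W + δ V a • W)
    (hF : ∀ U V W Z : L,
      Pform br (U * V) W Z = U * Pform br V W Z + V * Pform br U W Z)
    (E : L) (hE : ∀ V W : L, Pform br E V W = V * W)
    (lam : Fin 4 → A)
    (hCH : ∏ i : Fin 4, (E - lam i • (1 : L)) = 0) :
    ∀ k : ℕ, 1 ≤ k →
      ∑ i : Fin 4,
        (((1 : ℤ) - (k : ℤ)) • E ^ k - δ (E ^ k) (lam i) • (1 : L)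
            + k • (lam i • E ^ (k - 1)))
          * ∏ j ∈ univ.erase i, (E - lam j • (1 : L)) = 0 := by
  intro k hk
  obtain ⟨m, rfl⟩ := Nat.exists_eq_add_of_le' hk
  simpa only [bracket_euler_pow_sub_smul_one hadd_left hadd_right halt hLeib hF hE hk] using
    sum_bracket_mul_prod_erase_eq_zero hadd_right (Pform_euler_pow hF hE m) _ hCH

/-- if `λ₁,…,λ₄ ∈ A` satisfy the Cayley–Hamilton relation
`∏ᵢ (E − λᵢ • e) = 0`, then for every `k ≥ 1`:
`∑ᵢ ((1−k)·E^k − (δ(E^k)(λᵢ)) • e + k·(λᵢ • E^{k−1})) ∘ ∏_{j≠i} (E − λⱼ • e) = 0`. -/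
theorem euler_cayley_hamilton_derivative {A L : Type*} [CommRing A] [CommRing L]
    [Algebra A L] (br : L → L → L)
    (hadd_left : ∀ x y z : L, br (x + y) z = br x z + br y z)
    (hadd_right : ∀ x y z : L, br x (y + z) = br x y + br x z)
    (halt : ∀ x : L, br x x = 0)
    (hjacobi : ∀ x y z : L, br x (br y z) + br y (br z x) + br z (br x y) = 0)
    (δ : L → A → A)
    (hLeib : ∀ (V W : L) (a : A), br V (a • W) = a • br V W + δ V a • W)
    (hF : ∀ U V W Z : L,
      Pform br (U * V) W Z = U * Pform br V W Z + V * Pform br U W Z)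
    (E : L) (hE : ∀ V W : L, Pform br E V W = V * W)
    (lam : Fin 4 → A)
    (hCH : ∏ i : Fin 4, (E - lam i • (1 : L)) = 0) :
    ∀ k : ℕ, 1 ≤ k →
      ∑ i : Fin 4,
        (((1 : ℤ) - (k : ℤ)) • E ^ k - δ (E ^ k) (lam i) • (1 : L)
            + k • (lam i • E ^ (k - 1)))
          * ∏ j ∈ univ.erase i, (E - lam j • (1 : L)) = 0 :=
  euler_cayley_hamilton_derivative_general br hadd_left hadd_right halt δ hLeib hF E hE lam hCH
end

section
/- Suppose λ₁, λ₂, λ₃, λ₄ ∈ A satisfy the Cayley–Hamilton relation ∏_{i=1}^{4} (E − λᵢ • e) = 0 in L (product with respect to ∘). Then for every integer k ≥ 1: ∑_{i=1}^{4} ( λᵢ^k − δ(E^k)(λᵢ) ) • ∏_{j ≠ i} (E − λⱼ • e) = 0. -/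
open Finset

/-- if `λ₁,…,λ₄ ∈ A` satisfy the Cayley–Hamilton relation
`∏ᵢ (E − λᵢ • e) = 0`, then for every `k ≥ 1`:
`∑ᵢ (λᵢ^k − δ(E^k)(λᵢ)) • ∏_{j≠i} (E − λⱼ • e) = 0`. -/
theorem euler_eigenvalue_relation {A L : Type*} [CommRing A] [CommRing L]
    [Algebra A L] (br : L → L → L)
    (hadd_left : ∀ x y z : L, br (x + y) z = br x z + br y z)
    (hadd_right : ∀ x y z : L, br x (y + z) = br x y + br x z)
    (halt : ∀ x : L, br x x = 0)
    (hjacobi : ∀ x y z : L, br x (br y z) + br y (br z x) + br z (br x y) = 0)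
    (δ : L → A → A)
    (hLeib : ∀ (V W : L) (a : A), br V (a • W) = a • br V W + δ V a • W)
    (hF : ∀ U V W Z : L,
      Pform br (U * V) W Z = U * Pform br V W Z + V * Pform br U W Z)
    (E : L) (hE : ∀ V W : L, Pform br E V W = V * W)
    (lam : Fin 4 → A)
    (hCH : ∏ i : Fin 4, (E - lam i • (1 : L)) = 0) :
    ∀ k : ℕ, 1 ≤ k →
      ∑ i : Fin 4,
        (lam i ^ k - δ (E ^ k) (lam i)) • ∏ j ∈ univ.erase i, (E - lam j • (1 : L))
          = 0 := by
  -- basic bracket lemmas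
  have hz : ∀ x : L, br x 0 = 0 := by
    intro x
    have h := hadd_right x 0 0
    rw [add_zero] at h
    linear_combination -h
  have hsub : ∀ x y z : L, br x (y - z) = br x y - br x z := by
    intro x y z
    have h1 := hadd_right x (y - z) z
    rw [sub_add_cancel] at h1
    linear_combination -h1
  have hskew : ∀ x y : L, br x y = -br y x := by
    intro x y
    have h := halt (x + y)
    rw [hadd_left, hadd_right, hadd_right, halt, halt] at h
    linear_combination h
  have hE1 : br E 1 = -1 := by
    have h := hE 1 1
    unfold Pform at h
    rw [mul_one] at h
    linear_combination -h
  have hEpow : ∀ n : ℕ, br E (E ^ (n + 1)) = (n : L) * E ^ (n + 1) := by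
    intro n
    induction n with
    | zero => simp [pow_one, halt]
    | succ m ih =>
      have h := hE (E ^ (m + 1)) E
      unfold Pform at h
      rw [halt, ← pow_succ] at h
      push_cast
      linear_combination h + E * ih
  have hPk : ∀ (n : ℕ) (V W : L),
      Pform br (E ^ (n + 1)) V W = ((n : L) + 1) * (E ^ n * (V * W)) := by
    intro n
    induction n with
    | zero =>
      intro V W
      rw [pow_one, hE V W]
      push_cast
      ring
    | succ m ih =>
      intro V W
      have h := hF E (E ^ (m + 1)) V W
      rw [← pow_succ'] at h
      rw [ih V W, hE V W] at h
      push_cast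
      linear_combination h
  have hbr1 : ∀ n : ℕ, br (E ^ (n + 1)) 1 = -(((n : L) + 1) * E ^ n) := by
    intro n
    have h := hPk n 1 1
    unfold Pform at h
    rw [mul_one, mul_one] at h
    linear_combination -h
  have hbrE : ∀ n : ℕ, br (E ^ (n + 1)) E = -((n : L) * E ^ (n + 1)) := by
    intro n
    rw [hskew, hEpow]
  intro k hk
  obtain ⟨n, rfl⟩ : ∃ n, k = n + 1 := ⟨k - 1, by omega⟩
  set F : Fin 4 → L := fun i => E - lam i • (1 : L) with hF4
  set g : Fin 4 → L := fun i => algebraMap A L (lam i) with hg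
  have hFg : ∀ i, F i = E - g i := by
    intro i
    rw [hF4, hg]
    simp [Algebra.smul_def]
  have hmul : ∀ V W : L, br (E ^ (n + 1)) (V * W)
      = br (E ^ (n + 1)) V * W + V * br (E ^ (n + 1)) W
        + (((n : L) + 1) * E ^ n) * (V * W) := by
    intro V W
    have h := hPk n V W
    unfold Pform at h
    linear_combination h
  have hDf : ∀ i, br (E ^ (n + 1)) (F i)
      = -((n : L) * E ^ (n + 1)) + g i * (((n : L) + 1) * E ^ n)
        - algebraMap A L (δ (E ^ (n + 1)) (lam i)) := by
    intro i
    have h1 : F i = E - lam i • (1 : L) := by rw [hF4]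
    rw [h1, hsub, hLeib, hbrE n, hbr1 n, hg]
    simp only [Algebra.smul_def, mul_one]
    ring
  have hEn : ∀ (i : Fin 4) (Q : L), F i * Q = 0 →
      ∀ m : ℕ, E ^ m * Q = g i ^ m * Q := by
    intro i Q hQ m
    rw [hFg i] at hQ
    induction m with
    | zero => simp
    | succ p ih =>
      have hE1Q : E * Q = g i * Q := by linear_combination hQ
      linear_combination (E ^ p) * hE1Q + (g i) * ih
  have hkey : ∀ (i : Fin 4) (Q : L), F i * Q = 0 →
      br (E ^ (n + 1)) (F i) * Q
        = (g i ^ (n + 1) - algebraMap A L (δ (E ^ (n + 1)) (lam i))) * Q := by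
    intro i Q hQ
    have h1 := hEn i Q hQ (n + 1)
    have h2 := hEn i Q hQ n
    rw [hDf i]
    linear_combination (-(n : L)) * h1 + (g i * ((n : L) + 1)) * h2
  rw [Fin.prod_univ_four] at hCH
  have H0 : br (E ^ (n + 1)) (F 0 * F 1 * F 2 * F 3) = 0 := by
    rw [hCH]; exact hz _
  have expand : br (E ^ (n + 1)) (F 0 * F 1 * F 2 * F 3)
      = br (E ^ (n + 1)) (F 0) * (F 1 * F 2 * F 3)
        + br (E ^ (n + 1)) (F 1) * (F 0 * F 2 * F 3)
        + br (E ^ (n + 1)) (F 2) * (F 0 * F 1 * F 3)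
        + br (E ^ (n + 1)) (F 3) * (F 0 * F 1 * F 2)
        + 3 * (((n : L) + 1) * E ^ n) * (F 0 * F 1 * F 2 * F 3) := by
    rw [hmul (F 0 * F 1 * F 2) (F 3), hmul (F 0 * F 1) (F 2), hmul (F 0) (F 1)]
    ring
  have e0 : ∏ j ∈ univ.erase (0 : Fin 4), F j = F 1 * (F 2 * F 3) := by
    have h : (univ.erase (0 : Fin 4)) = {1, 2, 3} := by decide
    rw [h, Finset.prod_insert (by decide), Finset.prod_insert (by decide),
      Finset.prod_singleton]
  have e1 : ∏ j ∈ univ.erase (1 : Fin 4), F j = F 0 * (F 2 * F 3) := by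
    have h : (univ.erase (1 : Fin 4)) = {0, 2, 3} := by decide
    rw [h, Finset.prod_insert (by decide), Finset.prod_insert (by decide),
      Finset.prod_singleton]
  have e2 : ∏ j ∈ univ.erase (2 : Fin 4), F j = F 0 * (F 1 * F 3) := by
    have h : (univ.erase (2 : Fin 4)) = {0, 1, 3} := by decide
    rw [h, Finset.prod_insert (by decide), Finset.prod_insert (by decide),
      Finset.prod_singleton]
  have e3 : ∏ j ∈ univ.erase (3 : Fin 4), F j = F 0 * (F 1 * F 2) := by
    have h : (univ.erase (3 : Fin 4)) = {0, 1, 2} := by decide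
    rw [h, Finset.prod_insert (by decide), Finset.prod_insert (by decide),
      Finset.prod_singleton]
  have hQ0 : F 0 * (F 1 * (F 2 * F 3)) = 0 := by linear_combination hCH
  have hQ1 : F 1 * (F 0 * (F 2 * F 3)) = 0 := by linear_combination hCH
  have hQ2 : F 2 * (F 0 * (F 1 * F 3)) = 0 := by linear_combination hCH
  have hQ3 : F 3 * (F 0 * (F 1 * F 2)) = 0 := by linear_combination hCH
  have k0 := hkey 0 _ hQ0
  have k1 := hkey 1 _ hQ1
  have k2 := hkey 2 _ hQ2
  have k3 := hkey 3 _ hQ3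
  rw [Fin.sum_univ_four, e0, e1, e2, e3]
  simp only [Algebra.smul_def, map_sub, map_pow, ← hg]
  linear_combination -k0 - k1 - k2 - k3 - expand + H0
    - (3 * (((n : L) + 1) * E ^ n)) * hCH
end
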